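/- arXiv:1612.06977 — 2 statements merged into one kernel-verified Lean document; each statement's English description precedes it below -/
import Mathlib

section
/- Let a, u, ψ : ℝ × ℝ → ℝ be continuously differentiable functions of (x,t) such that u satisfies the conservative transport equation ∂u/∂t + ∂/∂x(a(x,t)u) = 0 everywhere and ψ satisfies the adjoint equation ∂ψ/∂t + a(x,t)∂ψ/∂x = 0 everywhere. Let x_l, x_r : ℝ → ℝ be differentiable with x_l'(t) = a(x_l(t),t) and x_r'(t) = a(x_r(t),t) for all t. Then the function t ↦ ∫_{x_l(t)}^{x_r(t)} u(x,t)·ψ(x,t) dx is constant on ℝ. -/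
/-!
Put `w = u ψ`. By the product rule,
`w_t + (a w)_x = ψ (u_t + (a u)_x) + u (ψ_t + a ψ_x) = 0`, so `w` is again conserved.
For a characteristic `X` and a fixed `c`, the Leibniz rule and `w_t = -(a w)_x` give
`d/dt ∫_c^{X t} w(x, t) dx = (a w)(X t, t) - ((a w)(X t, t) - (a w)(c, t)) = (a w)(c, t)`:
the endpoint moves with the flow, so no mass crosses it. Subtracting this identity for `x_l`
from the one for `x_r` shows that `∫_{x_l t}^{x_r t} w(x, t) dx` has derivative zero.
-/

open intervalIntegral Filter ContinuousLinearMap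

section Leibniz

variable {E : Type*} [NormedAddCommGroup E] [NormedSpace ℝ E]

theorem DifferentiableAt.hasDerivAt_comp_mk_left {f : ℝ × ℝ → E} {x t : ℝ}
    (hf : DifferentiableAt ℝ f (x, t)) :
    HasDerivAt (fun y => f (y, t)) (fderiv ℝ f (x, t) (1, 0)) x := by
  simpa [Function.comp_def] using
    hf.hasFDerivAt.comp_hasDerivAt x ((hasDerivAt_id x).prodMk (hasDerivAt_const x t))

theorem DifferentiableAt.hasDerivAt_comp_mk_right {f : ℝ × ℝ → E} {x t : ℝ}
    (hf : DifferentiableAt ℝ f (x, t)) :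
    HasDerivAt (fun s => f (x, s)) (fderiv ℝ f (x, t) (0, 1)) t := by
  simpa [Function.comp_def] using
    hf.hasFDerivAt.comp_hasDerivAt t ((hasDerivAt_const t x).prodMk (hasDerivAt_id t))

variable {w : ℝ × ℝ → E}

theorem hasDerivAt_integral_param (hw : ContDiff ℝ 1 w) (c d t₀ : ℝ) :
    HasDerivAt (fun t => ∫ x in c..d, w (x, t)) (∫ x in c..d, fderiv ℝ w (x, t₀) (0, 1)) t₀ := by
  have hw' := hw.continuous_fderiv one_ne_zero
  obtain ⟨M, hM⟩ := (isCompact_uIcc.prod (isCompact_closedBall t₀ 1)).exists_bound_of_continuousOn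
    (f := fun p => fderiv ℝ w p (0, 1)) (by fun_prop)
  refine (hasDerivAt_integral_of_dominated_loc_of_deriv_le (μ := MeasureTheory.volume)
    (F := fun t x => w (x, t)) (F' := fun t x => fderiv ℝ w (x, t) (0, 1)) (bound := fun _ => M)
    (Metric.ball_mem_nhds t₀ one_pos) ?_ ?_ ?_ ?_ intervalIntegrable_const ?_).2
  · exact Eventually.of_forall fun t => Continuous.aestronglyMeasurable (by fun_prop)
  · exact Continuous.intervalIntegrable (by fun_prop) _ _
  · exact Continuous.aestronglyMeasurable (by fun_prop)
  · exact MeasureTheory.ae_of_all _ fun x hx t ht =>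
      hM (x, t) ⟨Set.uIoc_subset_uIcc hx, Metric.ball_subset_closedBall ht⟩
  · exact MeasureTheory.ae_of_all _ fun x _ t _ =>
      (hw.differentiable one_ne_zero (x, t)).hasDerivAt_comp_mk_right

theorem hasStrictFDerivAt_primitive_param [CompleteSpace E] (hw : ContDiff ℝ 1 w) (c : ℝ)
    (p : ℝ × ℝ) :
    HasStrictFDerivAt (fun q : ℝ × ℝ => ∫ x in c..q.1, w (x, q.2))
      ((toSpanSingleton ℝ (w p)).coprod
        (toSpanSingleton ℝ (∫ x in c..p.1, fderiv ℝ w (x, p.2) (0, 1)))) p := by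
  have hw' := hw.continuous_fderiv one_ne_zero
  refine hasStrictFDerivAt_uncurry_coprod
    (f := fun y t => ∫ x in c..y, w (x, t))
    (f₁ := fun y t => toSpanSingleton ℝ (w (y, t)))
    (f₂ := fun y t => toSpanSingleton ℝ (∫ x in c..y, fderiv ℝ w (x, t) (0, 1)))
    (Eventually.of_forall fun q => ?_) (Eventually.of_forall fun q => ?_) ?_ ?_
  · exact hasDerivAt_iff_hasFDerivAt.mp
      ((Continuous.integral_hasStrictDerivAt (by fun_prop) c q.1).hasDerivAt)
  · exact hasDerivAt_iff_hasFDerivAt.mp (hasDerivAt_integral_param hw c q.1 q.2)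
  · exact ((toSpanSingletonLIE ℝ E).continuous.comp hw.continuous).continuousAt
  · refine ((toSpanSingletonLIE ℝ E).continuous.comp ?_).continuousAt
    exact (continuous_parametric_primitive_of_continuous
      (f := fun t x => fderiv ℝ w (x, t) (0, 1)) (by fun_prop)).comp continuous_swap

theorem hasDerivAt_integral_param_of_hasDerivAt [CompleteSpace E] (hw : ContDiff ℝ 1 w) (c : ℝ)
    {g : ℝ → ℝ} {g' t₀ : ℝ} (hg : HasDerivAt g g' t₀) :
    HasDerivAt (fun t => ∫ x in c..g t, w (x, t))
      (g' • w (g t₀, t₀) + ∫ x in c..g t₀, fderiv ℝ w (x, t₀) (0, 1)) t₀ := by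
  simpa [Function.comp_def] using
    (hasStrictFDerivAt_primitive_param hw c (g t₀, t₀)).hasFDerivAt.comp_hasDerivAt
      (f := fun t => (g t, t)) t₀ (hg.prodMk (hasDerivAt_id t₀))

end Leibniz

def IsCharacteristic (a : ℝ × ℝ → ℝ) (X : ℝ → ℝ) : Prop :=
  ∀ t, HasDerivAt X (a (X t, t)) t

def SolvesConservativeTransport (a w : ℝ × ℝ → ℝ) : Prop :=
  ∀ p, fderiv ℝ w p (0, 1) + fderiv ℝ (fun q => a q * w q) p (1, 0) = 0

def SolvesAdjointTransport (a ψ : ℝ × ℝ → ℝ) : Prop :=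
  ∀ p, fderiv ℝ ψ p (0, 1) + a p * fderiv ℝ ψ p (1, 0) = 0

namespace SolvesConservativeTransport

variable {a w : ℝ × ℝ → ℝ}

theorem mul_adjoint {u ψ : ℝ × ℝ → ℝ} (hu_eq : SolvesConservativeTransport a u)
    (hψ_eq : SolvesAdjointTransport a ψ) (ha : Differentiable ℝ a) (hu : Differentiable ℝ u)
    (hψ : Differentiable ℝ ψ) :
    SolvesConservativeTransport a fun q => u q * ψ q := by
  intro p
  have hflux : (fun q => a q * (u q * ψ q)) = fun q => a q * u q * ψ q := by
    funext q
    ring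
  simp only [hflux]
  rw [fderiv_fun_mul (hu p) (hψ p), fderiv_fun_mul ((ha p).fun_mul (hu p)) (hψ p)]
  simp only [add_apply, smul_apply, smul_eq_mul]
  linear_combination ψ p * hu_eq p + u p * hψ_eq p

theorem hasDerivAt_integral_characteristic (hcons : SolvesConservativeTransport a w)
    (ha : Differentiable ℝ a) (hw : ContDiff ℝ 1 w) (c : ℝ) {X : ℝ → ℝ}
    (hX : IsCharacteristic a X) (t₀ : ℝ) :
    HasDerivAt (fun t => ∫ x in c..X t, w (x, t)) (a (c, t₀) * w (c, t₀)) t₀ := by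
  have hw' := hw.continuous_fderiv one_ne_zero
  have hflux : ∫ x in c..X t₀, fderiv ℝ w (x, t₀) (0, 1)
      = a (c, t₀) * w (c, t₀) - a (X t₀, t₀) * w (X t₀, t₀) := by
    rw [integral_eq_sub_of_hasDerivAt (f := fun x => -(a (x, t₀) * w (x, t₀))) (fun x _ => ?_)
      (Continuous.intervalIntegrable (by fun_prop) _ _)]
    · ring
    · refine ((ha (x, t₀)).fun_mul (hw.differentiable one_ne_zero (x, t₀))).hasDerivAt_comp_mk_left
        |>.neg.congr_deriv ?_
      linarith [hcons (x, t₀)]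
  have hleibniz := hasDerivAt_integral_param_of_hasDerivAt hw c (hX t₀)
  rw [hflux, smul_eq_mul] at hleibniz
  exact hleibniz.congr_deriv (by ring)

theorem integral_between_characteristics_eq (hcons : SolvesConservativeTransport a w)
    (ha : Differentiable ℝ a) (hw : ContDiff ℝ 1 w) {xl xr : ℝ → ℝ}
    (hxl : IsCharacteristic a xl) (hxr : IsCharacteristic a xr) (s t : ℝ) :
    ∫ x in xl s..xr s, w (x, s) = ∫ x in xl t..xr t, w (x, t) := by
  have hsplit : (fun t => ∫ x in xl t..xr t, w (x, t))
      = fun t => (∫ x in 0..xr t, w (x, t)) - ∫ x in 0..xl t, w (x, t) := by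
    funext t
    exact (integral_interval_sub_left (Continuous.intervalIntegrable (by fun_prop) _ _)
      (Continuous.intervalIntegrable (by fun_prop) _ _)).symm
  have hderiv : ∀ t₀, HasDerivAt (fun t => ∫ x in xl t..xr t, w (x, t)) 0 t₀ := fun t₀ => by
    have hdiff := (hcons.hasDerivAt_integral_characteristic ha hw 0 hxr t₀).sub
      (hcons.hasDerivAt_integral_characteristic ha hw 0 hxl t₀)
    rw [sub_self] at hdiff
    rw [hsplit]
    exact hdiff
  exact is_const_of_deriv_eq_zero (fun t => (hderiv t).differentiableAt)
    (fun t => (hderiv t).deriv) s t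

end SolvesConservativeTransport

/-- Identity (2.4): if `u` solves the conservative transport equation
`u_t + (a u)_x = 0`, `ψ` solves the adjoint equation `ψ_t + a ψ_x = 0`, and
`x_l`, `x_r` are characteristic curves of `a`, then
`∫_{x_l(t)}^{x_r(t)} u ψ dx` is constant in `t`. -/
theorem sldg_stmt2
    (a u ψ : ℝ × ℝ → ℝ)
    (ha : ContDiff ℝ 1 a) (hu : ContDiff ℝ 1 u) (hψ : ContDiff ℝ 1 ψ)
    (hcons : ∀ p : ℝ × ℝ,
      fderiv ℝ u p (0, 1) + fderiv ℝ (fun q => a q * u q) p (1, 0) = 0)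
    (hadj : ∀ p : ℝ × ℝ, fderiv ℝ ψ p (0, 1) + a p * fderiv ℝ ψ p (1, 0) = 0)
    (xl xr : ℝ → ℝ)
    (hxl : Differentiable ℝ xl) (hxr : Differentiable ℝ xr)
    (hodel : ∀ t : ℝ, deriv xl t = a (xl t, t))
    (hoder : ∀ t : ℝ, deriv xr t = a (xr t, t)) :
    ∀ s t : ℝ,
      (∫ x in xl s..xr s, u (x, s) * ψ (x, s))
        = ∫ x in xl t..xr t, u (x, t) * ψ (x, t) := by
  have ha' : Differentiable ℝ a := ha.differentiable one_ne_zero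
  have hcons_uψ : SolvesConservativeTransport a fun q => u q * ψ q :=
    SolvesConservativeTransport.mul_adjoint hcons hadj ha' (hu.differentiable one_ne_zero)
      (hψ.differentiable one_ne_zero)
  have hxl_char : IsCharacteristic a xl := fun t => hodel t ▸ (hxl t).hasDerivAt
  have hxr_char : IsCharacteristic a xr := fun t => hoder t ▸ (hxr t).hasDerivAt
  exact hcons_uψ.integral_between_characteristics_eq ha' (hu.mul hψ) hxl_char hxr_char
end

section
/- Let T > 0 and define the velocity field v : ℝ × ℝ² → ℝ² by v(t, (x,y)) = π·cos(πt/T)·( −cos²(x/2)·sin(y) , sin(x)·cos²(y/2) ). Then every continuously differentiable curve γ : [0,T] → ℝ² with γ'(t) = v(t, γ(t)) for all t ∈ [0,T] satisfies γ(T) = γ(0). -/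
open Real Set
open scoped NNReal

/-! Since `v (T - t) = -v t`, the reversed curve `t ↦ γ (T - t)` solves the same ODE as `γ`, and
the two curves meet at `t = T / 2`. The field is Lipschitz in space uniformly in time, so by
uniqueness of solutions they coincide on `[0, T]`; at `t = T` this reads `γ T = γ 0`. -/

section TimeReversible

variable {E : Type*} [NormedAddCommGroup E] [NormedSpace ℝ E] {v : ℝ → E → E} {T : ℝ}

theorem HasDerivAt.comp_const_sub_of_time_reversible {γ : ℝ → E} {t : ℝ}
    (hrev : ∀ p, v (T - t) p = -v t p) (hγ : HasDerivAt γ (v (T - t) (γ (T - t))) (T - t)) :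
    HasDerivAt (fun s ↦ γ (T - s)) (v t (γ (T - t))) t := by
  simpa [hrev, Function.comp_def] using hγ.scomp t ((hasDerivAt_id t).const_sub T)

theorem ODE_solution_eq_of_time_reversible {K : ℝ≥0} (hT : 0 < T)
    (hv : ∀ t ∈ Ioo 0 T, LipschitzWith K (v t))
    (hrev : ∀ t ∈ Icc 0 T, ∀ p, v (T - t) p = -v t p)
    {γ : ℝ → E} (hγ : ∀ t ∈ Icc 0 T, HasDerivAt γ (v t (γ t)) t) : γ T = γ 0 := by
  have hγrev : ∀ t ∈ Icc 0 T, HasDerivAt (fun s ↦ γ (T - s)) (v t (γ (T - t))) t :=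
    fun t ht ↦ (hγ (T - t) ⟨by linarith [ht.2], by linarith [ht.1]⟩)
      |>.comp_const_sub_of_time_reversible (hrev t ht)
  have hmid : T / 2 ∈ Ioo 0 T := ⟨by linarith, by linarith⟩
  have heq := ODE_solution_unique_of_mem_Icc (s := fun _ ↦ univ)
    (fun t ht ↦ (hv t ht).lipschitzOnWith) hmid
    (HasDerivAt.continuousOn hγ) (fun t ht ↦ hγ t (Ioo_subset_Icc_self ht)) (fun _ _ ↦ trivial)
    (HasDerivAt.continuousOn hγrev) (fun t ht ↦ hγrev t (Ioo_subset_Icc_self ht))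
    (fun _ _ ↦ trivial) (by ring_nf)
  simpa using heq (right_mem_Icc.2 hT.le)

end TimeReversible

theorem LipschitzWith.mul_of_norm_le {α R : Type*} [PseudoMetricSpace α] [NonUnitalSeminormedRing R]
    {f g : α → R} {Kf Kg Mf Mg : ℝ≥0} (hf : LipschitzWith Kf f) (hg : LipschitzWith Kg g)
    (hMf : ∀ x, ‖f x‖ ≤ Mf) (hMg : ∀ x, ‖g x‖ ≤ Mg) :
    LipschitzWith (Mg * Kf + Mf * Kg) fun x ↦ f x * g x := by
  refine LipschitzWith.of_dist_le_mul fun x y ↦ ?_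
  calc dist (f x * g x) (f y * g y) = ‖(f x - f y) * g x + f y * (g x - g y)‖ := by
        rw [dist_eq_norm]; congr 1; noncomm_ring
    _ ≤ ‖f x - f y‖ * ‖g x‖ + ‖f y‖ * ‖g x - g y‖ :=
        (norm_add_le _ _).trans (add_le_add (norm_mul_le _ _) (norm_mul_le _ _))
    _ ≤ Kf * dist x y * Mg + Mf * (Kg * dist x y) := by
        rw [← dist_eq_norm, ← dist_eq_norm]
        gcongr
        exacts [hf.dist_le_mul x y, hMg x, hMf y, hg.dist_le_mul x y]
    _ = ↑(Mg * Kf + Mf * Kg) * dist x y := by push_cast; ring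

theorem lipschitzWith_cos_half_sq : LipschitzWith 1 fun x : ℝ ↦ cos (x / 2) ^ 2 := by
  have half_angle (x : ℝ) : cos (x / 2) ^ 2 = 1 / 2 + cos x / 2 := by rw [cos_sq]; ring_nf
  refine LipschitzWith.of_dist_le_mul fun x y ↦ ?_
  rw [NNReal.coe_one, one_mul, Real.dist_eq, Real.dist_eq, half_angle, half_angle]
  calc |1 / 2 + cos x / 2 - (1 / 2 + cos y / 2)| = |cos x - cos y| / 2 := by
        rw [← abs_two, ← abs_div]; ring_nf
    _ ≤ |x - y| := by linarith [abs_cos_sub_cos_le x y, abs_nonneg (x - y)]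

noncomputable def swirl (p : ℝ × ℝ) : ℝ × ℝ :=
  (-cos (p.1 / 2) ^ 2 * sin p.2, sin p.1 * cos (p.2 / 2) ^ 2)

theorem lipschitzWith_swirl : LipschitzWith 2 swirl := by
  have hfst : LipschitzWith 1 (Prod.fst : ℝ × ℝ → ℝ) := LipschitzWith.prod_fst
  have hsnd : LipschitzWith 1 (Prod.snd : ℝ × ℝ → ℝ) := LipschitzWith.prod_snd
  have h₁ : LipschitzWith 2 fun p : ℝ × ℝ ↦ -cos (p.1 / 2) ^ 2 * sin p.2 := by
    simpa [one_add_one_eq_two] using ((lipschitzWith_cos_half_sq.comp hfst).neg.mul_of_norm_le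
      (lipschitzWith_sin.comp hsnd) (Mf := 1) (Mg := 1)
      (fun p ↦ by simpa using abs_cos_le_one _) (fun p ↦ by simpa using abs_sin_le_one _))
  have h₂ : LipschitzWith 2 fun p : ℝ × ℝ ↦ sin p.1 * cos (p.2 / 2) ^ 2 := by
    simpa [one_add_one_eq_two] using ((lipschitzWith_sin.comp hfst).mul_of_norm_le
      (lipschitzWith_cos_half_sq.comp hsnd) (Mf := 1) (Mg := 1)
      (fun p ↦ by simpa using abs_sin_le_one _) (fun p ↦ by simpa using abs_cos_le_one _))
  exact max_self (2 : ℝ≥0) ▸ h₁.prodMk h₂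

theorem cos_pi_mul_sub_div {T : ℝ} (hT : T ≠ 0) (t : ℝ) :
    cos (π * (T - t) / T) = -cos (π * t / T) := by
  rw [show π * (T - t) / T = π - π * t / T by field_simp, cos_pi_sub]

/-- For the swirling deformation flow with time modulation
`g(t) = π cos(πt/T)`, every characteristic curve returns to its starting
point at time `T`. -/
theorem sldg_stmt15
    (T : ℝ) (hT : 0 < T)
    (v : ℝ → ℝ × ℝ → ℝ × ℝ)
    (hv : ∀ t : ℝ, ∀ p : ℝ × ℝ,
      v t p = (Real.pi * Real.cos (Real.pi * t / T)) •
        (-Real.cos (p.1 / 2) ^ 2 * Real.sin p.2,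
          Real.sin p.1 * Real.cos (p.2 / 2) ^ 2)) :
    ∀ γ : ℝ → ℝ × ℝ,
      (∀ t ∈ Set.Icc 0 T, HasDerivAt γ (v t (γ t)) t) → γ T = γ 0 := by
  intro γ hγ
  have hv_eq (t : ℝ) : v t = fun p ↦ (π * cos (π * t / T)) • swirl p := funext (hv t)
  have hlip (t : ℝ) : LipschitzWith (NNReal.pi * 2) (v t) := by
    have hmod : ‖π * cos (π * t / T)‖₊ ≤ NNReal.pi := by
      rw [← NNReal.coe_le_coe, coe_nnnorm, NNReal.coe_real_pi, norm_mul, norm_of_nonneg pi_pos.le]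
      exact mul_le_of_le_one_right pi_pos.le (abs_cos_le_one _)
    rw [hv_eq]
    exact ((lipschitzWith_smul _).comp lipschitzWith_swirl).weaken (by gcongr)
  have hrev (t : ℝ) (p : ℝ × ℝ) : v (T - t) p = -v t p := by
    rw [hv, hv, cos_pi_mul_sub_div hT.ne', mul_neg, neg_smul]
  exact ODE_solution_eq_of_time_reversible hT (fun t _ ↦ hlip t) (fun t _ ↦ hrev t) hγ
end
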